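/- arXiv:2508.08175 — 5 statements merged into one kernel-verified Lean document; each statement's English description precedes it below -/
import Mathlib

section
/- Let k be a commutative ring, m a natural number, and a : Fin m → ℕ with aᵢ ≥ 1 for every i. Let φ : MvPolynomial (Fin m) k → MvPolynomial (Fin m) k be the k-algebra homomorphism determined by φ(Xᵢ) = Xᵢ^{aᵢ} for each i. Then MvPolynomial (Fin m) k, regarded as a module over itself via restriction of scalars along φ, is a flat module. -/
/-!
With `φ` induced by the monoid map `d ↦ a • d` on exponent vectors, division with remainder in
each coordinate writes every exponent vector uniquely as `r + a • q` with `0 ≤ rᵢ < aᵢ`. Hence the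
monomials `X ^ r` with such `r` form a basis of `k[X]` over `φ`, so it is free, hence flat.
-/

open AddMonoidAlgebra

namespace AddMonoidAlgebra

variable {k M N ι : Type*} [Semiring k] [AddMonoid M] [AddCommMonoid N]

theorem free_mapDomainRingHom_of_bijective (f : M →+ N) (g : ι → N)
    (h : Function.Bijective fun p : ι × M => g p.1 + f p.2) :
    @Module.Free k[M] k[N] _ _ (Module.compHom k[N] (mapDomainRingHom k f)) := by
  let _ := Module.compHom k[N] (mapDomainRingHom k f)
  let T : (ι →₀ k[M]) →ₗ[k[M]] k[N] := Finsupp.linearCombination k[M] fun r => single (g r) 1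
  let C : (ι →₀ k[M]) ≃+ k[N] :=
    (Finsupp.mapRange.addEquiv coeffAddEquiv).trans <| Finsupp.curryAddEquiv.symm.trans <|
      (Finsupp.domCongr (Equiv.ofBijective _ h)).trans coeffAddEquiv.symm
  -- `C` reindexes coefficients along `(r, x) ↦ g r + f x`, which is what `T` does on monomials.
  have hTC : T.toAddMonoidHom = C.toAddMonoidHom := by
    refine Finsupp.addHom_ext' fun r => addHom_ext' fun x => ?_
    ext c : 1
    have hsmul : single x c • single (g r) 1 = single (f x + g r) c := by
      change mapDomainRingHom k f (single x c) * single (g r) (1 : k) = _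
      rw [mapDomainRingHom_apply, mapDomain_single, single_mul_single, mul_one]
    simp [T, C, hsmul, add_comm]
  have hT : Function.Bijective T := congrArg DFunLike.coe hTC ▸ C.bijective
  exact .of_basis (.ofRepr (LinearEquiv.ofBijective T hT).symm)

end AddMonoidAlgebra

namespace Finsupp

variable {σ : Type*} {a : σ → ℕ}

theorem bijective_add_pointwise_smul (ha : ∀ i, 0 < a i) :
    Function.Bijective fun p : {r : σ →₀ ℕ // ∀ i, r i < a i} × (σ →₀ ℕ) => p.1.1 + a • p.2 := by
  constructor
  · rintro ⟨⟨r, hr⟩, q⟩ ⟨⟨r', hr'⟩, q'⟩ h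
    have div_mod_eq {i s t} (hs : s < a i) : (s + a i * t) / a i = t ∧ (s + a i * t) % a i = s :=
      (Nat.div_mod_unique (ha i)).2 ⟨rfl, hs⟩
    have hi i : r i + a i * q i = r' i + a i * q' i := by simpa using DFunLike.congr_fun h i
    refine Prod.ext (Subtype.ext (ext fun i => ?_)) (ext fun i => ?_)
    · rw [← (div_mod_eq (t := q i) (hr i)).2, ← (div_mod_eq (t := q' i) (hr' i)).2, hi]
    · rw [← (div_mod_eq (t := q i) (hr i)).1, ← (div_mod_eq (t := q' i) (hr' i)).1, hi]
  · intro d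
    refine ⟨(⟨onFinset d.support (fun i => d i % a i) fun i h => ?_,
        fun i => by simpa using Nat.mod_lt _ (ha i)⟩,
      onFinset d.support (fun i => d i / a i) fun i h => ?_),
      ext fun i => by simp [Nat.mod_add_div]⟩ <;>
    exact mem_support_iff.2 fun h0 => h (by simp [h0])

end Finsupp

namespace MvPolynomial

variable {σ k : Type*} [CommSemiring k]

theorem aeval_X_pow_eq_mapDomainRingHom (a : σ → ℕ) :
    (aeval fun i => X i ^ a i : MvPolynomial σ k →ₐ[k] MvPolynomial σ k).toRingHom =
      mapDomainRingHom k (DistribSMul.toAddMonoidHom (σ →₀ ℕ) a) := by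
  suffices (aeval fun i => X i ^ a i) =
      mapDomainAlgHom k k (DistribSMul.toAddMonoidHom (σ →₀ ℕ) a) from
    congrArg AlgHom.toRingHom this
  refine algHom_ext fun i => ?_
  have hf : DistribSMul.toAddMonoidHom (σ →₀ ℕ) a (Finsupp.single i 1) =
      Finsupp.single i (a i) := by
    ext j
    by_cases hj : i = j <;> simp [hj]
  change _ = mapDomain _ (single (Finsupp.single i 1) 1)
  rw [mapDomain_single, hf, aeval_X, X_pow_eq_monomial]
  rfl

end MvPolynomial

/-- Let `k` be a commutative ring and `φ : k[X₁,…,Xₘ] → k[X₁,…,Xₘ]` the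
`k`-algebra homomorphism with `φ(Xᵢ) = Xᵢ^{aᵢ}` where each `aᵢ ≥ 1`.  Then the
polynomial ring, viewed as a module over itself by restriction of scalars
along `φ`, is flat. -/
theorem flat_of_power_map
    (k : Type*) [CommRing k] (m : ℕ) (a : Fin m → ℕ) (ha : ∀ i, 1 ≤ a i) :
    @Module.Flat (MvPolynomial (Fin m) k) (MvPolynomial (Fin m) k) _ _
      (Module.compHom (MvPolynomial (Fin m) k)
        (MvPolynomial.aeval (fun i => MvPolynomial.X i ^ a i) :
          MvPolynomial (Fin m) k →ₐ[k] MvPolynomial (Fin m) k).toRingHom) := by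
  rw [MvPolynomial.aeval_X_pow_eq_mapDomainRingHom]
  have := free_mapDomainRingHom_of_bijective (k := k) (DistribSMul.toAddMonoidHom _ a) Subtype.val
    (Finsupp.bijective_add_pointwise_smul ha)
  exact @Module.Flat.of_free _ _ _ _ (Module.compHom _ _) this
end

section
/- Let R be a commutative ring, σ a type, and s a finite set of elements of σ. In the polynomial ring MvPolynomial σ R, the ideal generated by the product ∏_{i ∈ s} Xᵢ equals the intersection ⋂_{i ∈ s} (Xᵢ) of the ideals generated by the individual variables Xᵢ for i ∈ s. -/
open MvPolynomial Finsupp in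
lemma prod_X_dvd_iff_aux {R : Type*} [CommRing R] {σ : Type*} (s : Finset σ)
    (p : MvPolynomial σ R) :
    (∏ i ∈ s, MvPolynomial.X i : MvPolynomial σ R) ∣ p ↔ ∀ i ∈ s, MvPolynomial.X i ∣ p := by
  classical
  constructor
  · intro h i hi
    exact dvd_trans (Finset.dvd_prod_of_mem _ hi) h
  · intro h
    have hd : (∏ i ∈ s, MvPolynomial.X i : MvPolynomial σ R)
        = monomial (∑ i ∈ s, Finsupp.single i 1) 1 := by
      clear h
      induction s using Finset.cons_induction with
      | empty => simp
      | cons a t ha ih =>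
        rw [Finset.prod_cons, Finset.sum_cons, ih, X, monomial_mul, one_mul]
    rw [hd, monomial_one_dvd_iff_modMonomial_eq_zero]
    ext m
    by_cases hle : (∑ i ∈ s, Finsupp.single i 1) ≤ m
    · simp [coeff_modMonomial_of_le _ hle]
    · rw [coeff_modMonomial_of_not_le _ hle, coeff_zero]
      rw [Finsupp.le_iff] at hle
      push_neg at hle
      obtain ⟨a, ha, hlt⟩ := hle
      have hsum : (∑ i ∈ s, Finsupp.single i 1) a = ∑ i ∈ s, (Finsupp.single i 1 : σ →₀ ℕ) a :=
        Finset.sum_apply' a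
      have has : a ∈ s := by
        by_contra hnot
        simp only [hsum] at hlt
        rw [Finset.sum_eq_zero (fun i hi => ?_)] at hlt
        · omega
        · rw [Finsupp.single_apply, if_neg]; rintro rfl; exact hnot hi
      have hma : m a = 0 := by
        have h1 : (∑ i ∈ s, Finsupp.single i 1) a ≤ 1 := by
          rw [hsum, Finset.sum_eq_single a
            (fun i _ hi => by rw [Finsupp.single_apply, if_neg hi])
            (fun hn => absurd has hn)]
          simp
        omega
      have hXa := h a has
      rw [X_dvd_iff_modMonomial_eq_zero] at hXa
      have : ¬ (Finsupp.single a 1 : σ →₀ ℕ) ≤ m := by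
        rw [Finsupp.le_iff]
        push_neg
        exact ⟨a, by simp, by simp [hma]⟩
      rw [← coeff_modMonomial_of_not_le p this, hXa, coeff_zero]

/-- In the polynomial ring `R[Xᵢ : i ∈ σ]`, the ideal generated by the product
`∏_{i ∈ s} Xᵢ` over a finite set `s` equals the intersection of the ideals
`(Xᵢ)` for `i ∈ s`. -/
theorem span_prod_X_eq_iInf
    (R : Type*) [CommRing R] (σ : Type*) (s : Finset σ) :
    Ideal.span {(∏ i ∈ s, MvPolynomial.X i : MvPolynomial σ R)} =
      ⨅ i ∈ s, Ideal.span {(MvPolynomial.X i : MvPolynomial σ R)} := by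
  ext p
  simp only [Ideal.mem_span_singleton, Ideal.mem_iInf]
  exact (prod_X_dvd_iff_aux s p).trans (by simp [Ideal.mem_span_singleton])
end

section
/- Let R be a commutative ring, n ≥ 1 a natural number, and write P = MvPolynomial (Fin n) R. Suppose f : Fin n → P is a tuple of polynomials such that fᵢ − f_j lies in the ideal generated by {Xᵢ, X_j} for all i, j. Then there exists a single polynomial g ∈ P such that g − fᵢ lies in the ideal generated by Xᵢ for every i. -/
open MvPolynomial

/-- The algebra map setting `X i := 0`. -/
noncomputable def setZero {R : Type*} [CommRing R] {n : ℕ} (i : Fin n) :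
    MvPolynomial (Fin n) R →ₐ[R] MvPolynomial (Fin n) R :=
  aeval (Function.update MvPolynomial.X i 0)

lemma setZero_X {R : Type*} [CommRing R] {n : ℕ} (i j : Fin n) :
    setZero (R := R) i (X j) = if j = i then 0 else X j := by
  simp [setZero, Function.update_apply]

/-- `p - p|_{Xᵢ=0} ∈ (Xᵢ)`. -/
lemma sub_setZero_mem {R : Type*} [CommRing R] {n : ℕ} (i : Fin n)
    (p : MvPolynomial (Fin n) R) :
    p - setZero i p ∈ Ideal.span {(X i : MvPolynomial (Fin n) R)} := by
  induction p using MvPolynomial.induction_on with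
  | C a => simp [setZero]
  | add p q hp hq =>
      have := add_mem hp hq
      have e : p + q - setZero i (p + q)
          = (p - setZero i p) + (q - setZero i q) := by
        rw [map_add]; ring
      rw [e]; exact this
  | mul_X p j hp =>
      rw [map_mul, setZero_X]
      by_cases hji : j = i
      · subst hji
        rw [if_pos rfl, mul_zero, sub_zero]
        exact Ideal.mem_span_singleton.mpr (dvd_mul_left _ _)
      · rw [if_neg hji]
        have e : p * X j - setZero i p * X j = (p - setZero i p) * X j := by ring
        rw [e]
        exact Ideal.mul_mem_right _ _ hp

/-- `setZero i` preserves `(Xⱼ)` for `j ≠ i`. -/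
lemma setZero_mem_span {R : Type*} [CommRing R] {n : ℕ} {i j : Fin n}
    (hji : j ≠ i) {p : MvPolynomial (Fin n) R}
    (hp : p ∈ Ideal.span {(X j : MvPolynomial (Fin n) R)}) :
    setZero i p ∈ Ideal.span {(X j : MvPolynomial (Fin n) R)} := by
  obtain ⟨q, rfl⟩ := Ideal.mem_span_singleton.mp hp
  rw [map_mul, setZero_X, if_neg hji]
  exact Ideal.mem_span_singleton.mpr (Dvd.intro _ rfl)

/-- `setZero i` maps `(Xᵢ, Xⱼ)` into `(Xⱼ)`. -/
lemma setZero_pair_mem {R : Type*} [CommRing R] {n : ℕ} {i j : Fin n}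
    (hji : j ≠ i) {p : MvPolynomial (Fin n) R}
    (hp : p ∈ Ideal.span {(X i : MvPolynomial (Fin n) R), X j}) :
    setZero i p ∈ Ideal.span {(X j : MvPolynomial (Fin n) R)} := by
  obtain ⟨a, b, rfl⟩ := Ideal.mem_span_pair.mp hp
  rw [map_add, map_mul, map_mul, setZero_X, setZero_X, if_pos rfl,
    if_neg hji, mul_zero, zero_add]
  exact Ideal.mem_span_singleton.mpr (dvd_mul_left _ _)

/-- A tuple of polynomials `fᵢ ∈ R[X₁,…,Xₙ]` that agree pairwise modulo
`(Xᵢ, Xⱼ)` glues to a single polynomial `g` with `g ≡ fᵢ mod (Xᵢ)` for each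
`i`. -/
theorem glue_functions_on_coordinate_hyperplanes
    (R : Type*) [CommRing R] (n : ℕ) (hn : 1 ≤ n)
    (f : Fin n → MvPolynomial (Fin n) R)
    (h : ∀ i j : Fin n, f i - f j ∈
      Ideal.span {MvPolynomial.X i, MvPolynomial.X j}) :
    ∃ g : MvPolynomial (Fin n) R,
      ∀ i : Fin n, g - f i ∈
        Ideal.span {(MvPolynomial.X i : MvPolynomial (Fin n) R)} := by
  have key : ∀ k, k ≤ n → ∃ g : MvPolynomial (Fin n) R,
      ∀ i : Fin n, (i : ℕ) < k → g - f i ∈ Ideal.span {X i} := by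
    intro k
    induction k with
    | zero => exact fun _ => ⟨0, fun i hi => absurd hi (Nat.not_lt_zero _)⟩
    | succ k ih =>
        intro hk
        obtain ⟨g, hg⟩ := ih (Nat.le_of_succ_le hk)
        set K : Fin n := ⟨k, hk⟩ with hK
        refine ⟨g + setZero K (f K - g), fun i hi => ?_⟩
        rcases Nat.lt_succ_iff_lt_or_eq.mp hi with h1 | h2
        · have hiK : i ≠ K := by
            intro e; rw [e] at h1; exact absurd h1 (lt_irrefl _)
          have m1 : setZero K (f K - f i) ∈ Ideal.span {(X i : MvPolynomial (Fin n) R)} :=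
            setZero_pair_mem hiK (h K i)
          have m2 : setZero K (f i - g) ∈ Ideal.span {(X i : MvPolynomial (Fin n) R)} := by
            refine setZero_mem_span hiK ?_
            have := neg_mem (hg i h1)
            simpa using this
          have e : g + setZero K (f K - g) - f i
              = (g - f i) + (setZero K (f K - f i) + setZero K (f i - g)) := by
            rw [← map_add, show (f K - f i) + (f i - g) = f K - g from by ring]
            ring
          rw [e]
          exact add_mem (hg i h1) (add_mem m1 m2)
        · have hiK : i = K := Fin.ext h2
          subst hiK
          have e : g + setZero K (f K - g) - f K
              = (g - setZero K g) - (f K - setZero K (f K)) := by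
            rw [map_sub]; ring
          rw [e]
          exact sub_mem (sub_setZero_mem K g) (sub_setZero_mem K (f K))
  obtain ⟨g, hg⟩ := key n le_rfl
  exact ⟨g, fun i => hg i i.isLt⟩
end

section
/- Fix natural numbers n, r with 1 ≤ r ≤ n and a constant C ∈ ℕ. The set of ℚ-linear subspaces V of ℚⁿ with the following property is finite: V has dimension r, and there exists an integer matrix A ∈ Matrix (Fin r) (Fin n) ℤ whose rows, viewed as vectors in ℚⁿ, span V, and such that every r × r minor of A (the determinant of the square submatrix of A obtained by choosing any r of the n columns) has absolute value at most C. -/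
/-!
Choose columns `f` on which the minor `M` of `A` is nonzero and replace `A` by
`B = adj(M) * A`. Over `ℚ` the matrix `adj(M)` is invertible, so `B` has the same row span as
`A`; by Cramer's rule the entry `B i j` is the minor of `A` on the columns `f` with `f i`
replaced by `j`, which is zero or, up to sign, one of the ordered minors, hence at most `C` in
absolute value. So every such span is the row span of an integer matrix with entries in
`[-C, C]`, and there are finitely many of those.
-/

open Matrix

theorem Fin.exists_orderEmbedding_comp_perm_of_injective {r n : ℕ} {f : Fin r → Fin n}
    (hf : Function.Injective f) :
    ∃ (g : Fin r ↪o Fin n) (σ : Equiv.Perm (Fin r)), f = g ∘ σ := by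
  have hmono : StrictMono (f ∘ Tuple.sort f) :=
    (Tuple.monotone_sort f).strictMono_of_injective (hf.comp (Tuple.sort f).injective)
  refine ⟨OrderEmbedding.ofStrictMono _ hmono, (Tuple.sort f).symm, ?_⟩
  ext i
  simp

namespace Matrix

variable {R : Type*}

section Minors

variable [CommRing R] {r n : ℕ}

theorem exists_abs_det_submatrix_eq_orderEmbedding [LinearOrder R] [IsOrderedRing R]
    (A : Matrix (Fin r) (Fin n) R) {f : Fin r → Fin n} (hf : Function.Injective f) :
    ∃ g : Fin r ↪o Fin n, |(A.submatrix id f).det| = |(A.submatrix id g).det| := by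
  obtain ⟨g, σ, rfl⟩ := Fin.exists_orderEmbedding_comp_perm_of_injective hf
  refine ⟨g, ?_⟩
  change |((A.submatrix id g).submatrix id σ).det| = _
  rw [det_permute']
  rcases Int.units_eq_one_or (Equiv.Perm.sign σ) with h | h <;> simp [h]

theorem abs_det_submatrix_le_of_forall_orderEmbedding [LinearOrder R] [IsOrderedRing R]
    {A : Matrix (Fin r) (Fin n) R} {C : R} (hC : 0 ≤ C)
    (hA : ∀ g : Fin r ↪o Fin n, |(A.submatrix id g).det| ≤ C) (f : Fin r → Fin n) :
    |(A.submatrix id f).det| ≤ C := by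
  by_cases hf : Function.Injective f
  · obtain ⟨g, hg⟩ := exists_abs_det_submatrix_eq_orderEmbedding A hf
    exact hg ▸ hA g
  · obtain ⟨i, j, hfij, hij⟩ := Function.not_injective_iff.mp hf
    rwa [det_zero_of_column_eq hij fun k => by simp [hfij], abs_zero]

theorem adjugate_submatrix_mul_apply (A : Matrix (Fin r) (Fin n) R) (f : Fin r → Fin n)
    (i : Fin r) (j : Fin n) :
    ((A.submatrix id f).adjugate * A) i j = (A.submatrix id (Function.update f i j)).det := by
  change ((A.submatrix id f).adjugate *ᵥ A.col j) i = _
  rw [← cramer_eq_adjugate_mulVec, cramer_apply]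
  congr 1
  ext k l
  rcases eq_or_ne l i with rfl | hl <;> simp [*]

end Minors

section RowSpan

variable {m n : Type*} [Fintype m] [DecidableEq m]

theorem span_range_row_mul_of_isUnit [CommRing R] {P : Matrix m m R} (hP : IsUnit P)
    (Q : Matrix m n R) :
    Submodule.span R (Set.range (P * Q).row) = Submodule.span R (Set.range Q.row) := by
  have hmul : (P * Q).vecMulLinear = Q.vecMulLinear ∘ₗ P.vecMulLinear :=
    LinearMap.ext fun v => (vecMul_vecMul v P Q).symm
  rw [← range_vecMulLinear, ← range_vecMulLinear, hmul, LinearMap.range_comp,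
    LinearMap.range_eq_top.mpr (vecMul_surjective_iff_isUnit.mpr hP), Submodule.map_top]

theorem span_range_row_map_adjugate_mul {K : Type*} [CommRing R] [Field K] (φ : R →+* K)
    {M : Matrix m m R} (hM : φ M.det ≠ 0) (A : Matrix m n R) :
    Submodule.span K (Set.range ((M.adjugate * A).map φ).row) =
      Submodule.span K (Set.range (A.map φ).row) := by
  rw [Matrix.map_mul, ← RingHom.mapMatrix_apply, RingHom.map_adjugate]
  refine span_range_row_mul_of_isUnit ?_ _
  rw [isUnit_iff_isUnit_det, det_adjugate, ← RingHom.map_det]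
  exact (isUnit_iff_ne_zero.mpr hM).pow _

end RowSpan

theorem exists_det_submatrix_ne_zero_of_rank_eq {K : Type*} [Field K] {r n : ℕ}
    (A : Matrix (Fin r) (Fin n) K) (hA : A.rank = r) :
    ∃ f : Fin r → Fin n, (A.submatrix id f).det ≠ 0 := by
  obtain ⟨κ, a, ha, hspan, hli⟩ := exists_linearIndependent' K A.col
  have : Finite κ := Finite.of_injective a ha
  have := Fintype.ofFinite κ
  have hcard : Fintype.card κ = r := by
    rw [← finrank_span_eq_card hli, hspan, ← rank_eq_finrank_span_cols, hA]
  let e : Fin r ≃ κ := (Fintype.equivFinOfCardEq hcard).symm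
  refine ⟨a ∘ e, ((isUnit_iff_isUnit_det _).mp (linearIndependent_cols_iff_isUnit.mp ?_)).ne_zero⟩
  exact hli.comp e e.injective

end Matrix

theorem finite_spans_of_bounded_minors_general
    (n r : ℕ) (C : ℕ) :
    {V : Submodule ℚ (Fin n → ℚ) |
      Module.finrank ℚ V = r ∧
      ∃ A : Matrix (Fin r) (Fin n) ℤ,
        Submodule.span ℚ (Set.range fun i : Fin r => fun j : Fin n => (A i j : ℚ)) = V ∧
        ∀ g : Fin r ↪o Fin n,
          |(A.submatrix id (g : Fin r → Fin n)).det| ≤ (C : ℤ)}.Finite := by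
  let φ := Int.castRingHom ℚ
  refine ((Set.finite_Icc (-fun _ _ => (C : ℤ)) fun (_ : Fin r) (_ : Fin n) => (C : ℤ)).image
    fun B => Submodule.span ℚ (Set.range (Matrix.map B φ).row)).subset ?_
  rintro V ⟨hV, A, rfl, hA⟩
  obtain ⟨f, hf⟩ := exists_det_submatrix_ne_zero_of_rank_eq (A.map φ)
    (by rwa [rank_eq_finrank_span_row])
  set M := A.submatrix id f
  have hM : φ M.det ≠ 0 := by rwa [RingHom.map_det]
  have hbound : ∀ i j, |(M.adjugate * A) i j| ≤ C := fun i j =>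
    adjugate_submatrix_mul_apply A f i j ▸
      abs_det_submatrix_le_of_forall_orderEmbedding (Int.natCast_nonneg C) hA _
  refine ⟨M.adjugate * A, ⟨?_, ?_⟩, span_range_row_map_adjugate_mul φ hM A⟩
  · exact fun i j => (abs_le.mp (hbound i j)).1
  · exact fun i j => (abs_le.mp (hbound i j)).2

/-- Finiteness of linear spans with bounded Plücker coordinates: for fixed
`1 ≤ r ≤ n` and a bound `C`, there are only finitely many `r`-dimensional
`ℚ`-subspaces of `ℚⁿ` that are row spans of integer `r × n` matrices all of
whose `r × r` minors have absolute value at most `C`. -/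
theorem finite_spans_of_bounded_minors
    (n r : ℕ) (hr : 1 ≤ r) (hrn : r ≤ n) (C : ℕ) :
    {V : Submodule ℚ (Fin n → ℚ) |
      Module.finrank ℚ V = r ∧
      ∃ A : Matrix (Fin r) (Fin n) ℤ,
        Submodule.span ℚ (Set.range fun i : Fin r => fun j : Fin n => (A i j : ℚ)) = V ∧
        ∀ g : Fin r ↪o Fin n,
          |(A.submatrix id (g : Fin r → Fin n)).det| ≤ (C : ℤ)}.Finite :=
  finite_spans_of_bounded_minors_general n r C
end

section
/- Let n ≥ 1 and let s be a natural number with s + 1 ≤ n. Let W be a finite set of nonzero linear functionals on ℝⁿ that contains all n coordinate functionals. Let κ ⊆ ℝⁿ be an intersection of finitely many open halfspaces of the form {x : A(x) > b} with A ∈ W and b ∈ ℝ. Let S be the set of linear maps F : ℝⁿ → ℝ^{s+1} whose s + 1 component functionals form a linearly independent family of elements of W. Then κ = ⋂_{F ∈ S} F⁻¹(F(κ)), where F(κ) denotes the image of κ under F. -/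
/-!
Each halfspace `{x | b < A x}` cutting out `κ` is seen by some admissible projection `F`:
since the coordinate functionals span the dual, the nonzero functional `A ∈ W` extends to
`s + 1` linearly independent elements of `W`, which we take as the components of `F` with
`A` first. If `F x = F y` for some `y ∈ κ`, then `A x = A y > b`.
-/

open Module Submodule

theorem exists_linearIndependent_fin_of_span_eq_top {K V : Type*} [DivisionRing K]
    [AddCommGroup V] [Module K V] [FiniteDimensional K V] {W : Set V} (hW : span K W = ⊤)
    {a : V} (ha : a ∈ W) (ha0 : a ≠ 0) :
    ∀ m : ℕ, m + 1 ≤ finrank K V →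
      ∃ f : Fin (m + 1) → V, f 0 = a ∧ (∀ j, f j ∈ W) ∧ LinearIndependent K f
  | 0, _ =>
    ⟨fun _ => a, rfl, fun _ => ha, linearIndependent_unique_iff (ι := Fin 1) |>.mpr ha0⟩
  | m + 1, hm => by
    obtain ⟨f, hf0, hfW, hf⟩ :=
      exists_linearIndependent_fin_of_span_eq_top hW ha ha0 m (by omega)
    have hspan : span K (Set.range f) ≠ ⊤ := fun h => by
      have := finrank_span_eq_card hf
      rw [h, finrank_top, Fintype.card_fin] at this
      omega
    obtain ⟨w, hwW, hw⟩ : ∃ w ∈ W, w ∉ span K (Set.range f) := by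
      by_contra! h
      exact hspan (eq_top_iff.mpr (hW ▸ span_le.mpr h))
    refine ⟨Fin.snoc f w, ?_, Fin.lastCases ?_ fun j => ?_,
      linearIndependent_finSnoc.mpr ⟨hf, hw⟩⟩
    · rw [← Fin.castSucc_zero, Fin.snoc_castSucc, hf0]
    · rwa [Fin.snoc_last]
    · rw [Fin.snoc_castSucc]; exact hfW j

theorem span_range_proj_eq_top (R ι : Type*) [CommSemiring R] [Fintype ι] [DecidableEq ι] :
    span R (Set.range fun i : ι => (LinearMap.proj i : (ι → R) →ₗ[R] R)) = ⊤ := by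
  have h : (Pi.basisFun R ι).dualBasis = fun i => (LinearMap.proj i : (ι → R) →ₗ[R] R) := by
    funext i; ext j; simp [Pi.single_apply]
  rw [← h, Basis.span_eq]

theorem eq_biInter_preimage_image_of_forall_halfspace {R V ι : Type*} [Semiring R] [LT R]
    [AddCommMonoid V] [Module R V] {κ : Set V} {T : Set ((V →ₗ[R] R) × R)}
    (hκ : κ = ⋂ p ∈ T, {x | p.2 < p.1 x}) {S : Set (V →ₗ[R] (ι → R))}
    (hS : ∀ p ∈ T, ∃ F ∈ S, ∃ j, LinearMap.proj j ∘ₗ F = p.1) :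
    κ = ⋂ F ∈ S, F ⁻¹' (F '' κ) := by
  refine (Set.subset_iInter₂ fun (F : V →ₗ[R] (ι → R)) _ =>
    Set.subset_preimage_image F κ).antisymm fun x hx => ?_
  subst hκ
  refine Set.mem_iInter₂.mpr fun ⟨A, b⟩ hp => ?_
  obtain ⟨F, hF, j, rfl⟩ := hS _ hp
  obtain ⟨y, hy, hyx⟩ := Set.mem_iInter₂.mp hx F hF
  simpa [← hyx] using Set.mem_iInter₂.mp hy _ hp

theorem stratum_determined_by_projections_general
    (n s : ℕ) (hs : s + 1 ≤ n)
    (W : Finset ((Fin n → ℝ) →ₗ[ℝ] ℝ))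
    (hW0 : ∀ A ∈ W, A ≠ 0)
    (hWcoord : ∀ i : Fin n, (LinearMap.proj i : (Fin n → ℝ) →ₗ[ℝ] ℝ) ∈ W)
    (κ : Set (Fin n → ℝ))
    (T : Finset (((Fin n → ℝ) →ₗ[ℝ] ℝ) × ℝ))
    (hT : ∀ p ∈ T, p.1 ∈ W)
    (hκ : κ = ⋂ p ∈ T, {x : Fin n → ℝ | p.2 < p.1 x}) :
    κ = ⋂ F ∈ {F : (Fin n → ℝ) →ₗ[ℝ] (Fin (s + 1) → ℝ) |
        (∀ j : Fin (s + 1), (LinearMap.proj j).comp F ∈ W) ∧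
        LinearIndependent ℝ fun j : Fin (s + 1) => (LinearMap.proj j).comp F},
      F ⁻¹' (F '' κ) := by
  have hWspan : span ℝ (W : Set ((Fin n → ℝ) →ₗ[ℝ] ℝ)) = ⊤ :=
    eq_top_mono (span_mono (Set.range_subset_iff.mpr hWcoord)) (span_range_proj_eq_top ℝ (Fin n))
  refine eq_biInter_preimage_image_of_forall_halfspace (T := T)
    (by rw [hκ]; simp only [Finset.mem_coe]) fun p hp => ?_
  obtain ⟨f, hf0, hfW, hf⟩ := exists_linearIndependent_fin_of_span_eq_top hWspan (hT p hp)
    (hW0 _ (hT p hp)) s (by simpa using hs)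
  have hcomp : (fun j => LinearMap.proj j ∘ₗ LinearMap.pi f) = f := funext (LinearMap.proj_pi f)
  exact ⟨LinearMap.pi f, ⟨fun j => hcomp ▸ hfW j, hcomp ▸ hf⟩, 0,
    by rw [LinearMap.proj_pi, hf0]⟩

/-- A set `κ ⊆ ℝⁿ` cut out by finitely many open halfspaces `{x : A x > b}`
with `A` in a finite set `W` of nonzero functionals containing all coordinate
functionals is recovered as the intersection, over all linear maps
`F : ℝⁿ → ℝ^{s+1}` whose component functionals form a linearly independent
family of elements of `W`, of the preimages `F⁻¹(F(κ))`. -/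
theorem stratum_determined_by_projections
    (n s : ℕ) (hn : 1 ≤ n) (hs : s + 1 ≤ n)
    (W : Finset ((Fin n → ℝ) →ₗ[ℝ] ℝ))
    (hW0 : ∀ A ∈ W, A ≠ 0)
    (hWcoord : ∀ i : Fin n, (LinearMap.proj i : (Fin n → ℝ) →ₗ[ℝ] ℝ) ∈ W)
    (κ : Set (Fin n → ℝ))
    (T : Finset (((Fin n → ℝ) →ₗ[ℝ] ℝ) × ℝ))
    (hT : ∀ p ∈ T, p.1 ∈ W)
    (hκ : κ = ⋂ p ∈ T, {x : Fin n → ℝ | p.2 < p.1 x}) :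
    κ = ⋂ F ∈ {F : (Fin n → ℝ) →ₗ[ℝ] (Fin (s + 1) → ℝ) |
        (∀ j : Fin (s + 1), (LinearMap.proj j).comp F ∈ W) ∧
        LinearIndependent ℝ fun j : Fin (s + 1) => (LinearMap.proj j).comp F},
      F ⁻¹' (F '' κ) :=
  stratum_determined_by_projections_general n s hs W hW0 hWcoord κ T hT hκ
end
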